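/- Let E, F, G be Hilbert spaces and let T : E → F and S : F → G be continuous linear operators such that T and S each have finite-dimensional kernel and closed image of finite codimension. Then the composition S ∘ T : E → G has finite-dimensional kernel and closed image of finite codimension, and its index satisfies ind(S ∘ T) = ind(S) + ind(T). -/

import Mathlib

open Module

/-!
The finiteness of the kernel and cokernel of `S ∘ T` and the additivity of the index are pure
linear algebra (`LinearMap.index_comp`). The only analytic point is that `S (range T)` is closed.
Since `ker S` is finite-dimensional, `W = range T + ker S` is closed, and `S (range T) = S W`.
By the open mapping theorem `S` is a quotient map onto its closed range, and `W` is saturated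
for it (`W ⊇ ker S`), so `S W` is closed.
-/

namespace ContinuousLinearMap

variable {𝕜 E F G : Type*} [NontriviallyNormedField 𝕜]
  [NormedAddCommGroup E] [NormedSpace 𝕜 E]
  [NormedAddCommGroup F] [NormedSpace 𝕜 F] [CompleteSpace F]
  [NormedAddCommGroup G] [NormedSpace 𝕜 G] [CompleteSpace G]

theorem isClosed_image_of_ker_le {S : F →L[𝕜] G} (hS : IsClosed (Set.range S))
    {W : Submodule 𝕜 F} (hW : IsClosed (W : Set F)) (hker : LinearMap.ker (S : F →ₗ[𝕜] G) ≤ W) :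
    IsClosed (S '' W) := by
  have : CompleteSpace (LinearMap.range (S : F →ₗ[𝕜] G)) := hS.completeSpace_coe
  set S' := S.rangeRestrict
  have hsurj : Function.Surjective S' := (S : F →ₗ[𝕜] G).surjective_rangeRestrict
  have hquot : Topology.IsQuotientMap S' := (S'.isOpenMap hsurj).isQuotientMap S'.continuous hsurj
  have hsat : S' ⁻¹' (S' '' W) = W := by
    have := congrArg SetLike.coe (Submodule.comap_map_eq (S : F →ₗ[𝕜] G).rangeRestrict W)
    rwa [LinearMap.ker_rangeRestrict, sup_of_le_left hker] at this
  have himage : S '' W = Subtype.val '' (S' '' W) := by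
    rw [Set.image_image]; rfl
  rw [himage]
  refine hS.isClosedEmbedding_subtypeVal.isClosedMap _ (hquot.isClosed_preimage.mp ?_)
  rwa [hsat]

theorem isClosed_range_comp [CompleteSpace 𝕜] {T : E →L[𝕜] F} {S : F →L[𝕜] G}
    (hT : IsClosed (Set.range T)) (hS : IsClosed (Set.range S))
    [FiniteDimensional 𝕜 (LinearMap.ker (S : F →ₗ[𝕜] G))] :
    IsClosed (Set.range (S.comp T)) := by
  set R := LinearMap.range (T : E →ₗ[𝕜] F)
  set N := LinearMap.ker (S : F →ₗ[𝕜] G)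
  have hW : IsClosed ((R ⊔ N : Submodule 𝕜 F) : Set F) :=
    R.isClosed_sup_finiteDimensional N (by rw [LinearMap.coe_range]; exact hT)
  have hmap : (R ⊔ N).map (S : F →ₗ[𝕜] G) = R.map (S : F →ₗ[𝕜] G) := by
    rw [Submodule.map_sup, LinearMap.le_ker_iff_map.mp le_rfl, sup_bot_eq]
  have hrange : Set.range (S.comp T) = S '' (R ⊔ N : Submodule 𝕜 F) := by
    calc Set.range (S.comp T) = S '' Set.range T := by rw [coe_comp, Set.range_comp]
      _ = R.map (S : F →ₗ[𝕜] G) := by rw [Submodule.map_coe, LinearMap.coe_range]; rfl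
      _ = S '' (R ⊔ N : Submodule 𝕜 F) := by rw [← hmap, Submodule.map_coe]; rfl
  rw [hrange]
  exact isClosed_image_of_ker_le hS hW le_sup_right

end ContinuousLinearMap

theorem fredholm_comp_index_general
    {E F G : Type*}
    [NormedAddCommGroup E] [InnerProductSpace ℝ E]
    [NormedAddCommGroup F] [InnerProductSpace ℝ F] [CompleteSpace F]
    [NormedAddCommGroup G] [InnerProductSpace ℝ G] [CompleteSpace G]
    (T : E →L[ℝ] F) (S : F →L[ℝ] G)
    (hTker : FiniteDimensional ℝ (LinearMap.ker (T : E →ₗ[ℝ] F)))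
    (hTclosed : IsClosed (Set.range T))
    (hTcoker : FiniteDimensional ℝ (F ⧸ LinearMap.range (T : E →ₗ[ℝ] F)))
    (hSker : FiniteDimensional ℝ (LinearMap.ker (S : F →ₗ[ℝ] G)))
    (hSclosed : IsClosed (Set.range S))
    (hScoker : FiniteDimensional ℝ (G ⧸ LinearMap.range (S : F →ₗ[ℝ] G))) :
    FiniteDimensional ℝ (LinearMap.ker ((S.comp T : E →L[ℝ] G) : E →ₗ[ℝ] G)) ∧
    IsClosed (Set.range (S.comp T)) ∧
    FiniteDimensional ℝ (G ⧸ LinearMap.range ((S.comp T : E →L[ℝ] G) : E →ₗ[ℝ] G)) ∧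
    (finrank ℝ (LinearMap.ker ((S.comp T : E →L[ℝ] G) : E →ₗ[ℝ] G)) : ℤ) -
        finrank ℝ (G ⧸ LinearMap.range ((S.comp T : E →L[ℝ] G) : E →ₗ[ℝ] G)) =
      ((finrank ℝ (LinearMap.ker (S : F →ₗ[ℝ] G)) : ℤ) - finrank ℝ (G ⧸ LinearMap.range (S : F →ₗ[ℝ] G))) +
      ((finrank ℝ (LinearMap.ker (T : E →ₗ[ℝ] F)) : ℤ) - finrank ℝ (F ⧸ LinearMap.range (T : E →ₗ[ℝ] F))) := by
  refine ⟨?_, ContinuousLinearMap.isClosed_range_comp hTclosed hSclosed, ?_, LinearMap.index_comp _⟩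
  · rw [ContinuousLinearMap.toLinearMap_comp, LinearMap.ker_comp]
    infer_instance
  · rw [ContinuousLinearMap.toLinearMap_comp, LinearMap.range_comp]
    infer_instance

/-- If `T : E →L F` and `S : F →L G` are Fredholm operators between Hilbert spaces
(finite-dimensional kernel and closed image of finite codimension), then so is `S ∘ T`,
and `ind (S ∘ T) = ind S + ind T`, where
`ind T = dim ker T − dim coker T`. -/
theorem fredholm_comp_index
    {E F G : Type*}
    [NormedAddCommGroup E] [InnerProductSpace ℝ E] [CompleteSpace E]
    [NormedAddCommGroup F] [InnerProductSpace ℝ F] [CompleteSpace F]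
    [NormedAddCommGroup G] [InnerProductSpace ℝ G] [CompleteSpace G]
    (T : E →L[ℝ] F) (S : F →L[ℝ] G)
    (hTker : FiniteDimensional ℝ (LinearMap.ker (T : E →ₗ[ℝ] F)))
    (hTclosed : IsClosed (Set.range T))
    (hTcoker : FiniteDimensional ℝ (F ⧸ LinearMap.range (T : E →ₗ[ℝ] F)))
    (hSker : FiniteDimensional ℝ (LinearMap.ker (S : F →ₗ[ℝ] G)))
    (hSclosed : IsClosed (Set.range S))
    (hScoker : FiniteDimensional ℝ (G ⧸ LinearMap.range (S : F →ₗ[ℝ] G))) :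
    FiniteDimensional ℝ (LinearMap.ker ((S.comp T : E →L[ℝ] G) : E →ₗ[ℝ] G)) ∧
    IsClosed (Set.range (S.comp T)) ∧
    FiniteDimensional ℝ (G ⧸ LinearMap.range ((S.comp T : E →L[ℝ] G) : E →ₗ[ℝ] G)) ∧
    (finrank ℝ (LinearMap.ker ((S.comp T : E →L[ℝ] G) : E →ₗ[ℝ] G)) : ℤ) -
        finrank ℝ (G ⧸ LinearMap.range ((S.comp T : E →L[ℝ] G) : E →ₗ[ℝ] G)) =
      ((finrank ℝ (LinearMap.ker (S : F →ₗ[ℝ] G)) : ℤ) - finrank ℝ (G ⧸ LinearMap.range (S : F →ₗ[ℝ] G))) +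
      ((finrank ℝ (LinearMap.ker (T : E →ₗ[ℝ] F)) : ℤ) - finrank ℝ (F ⧸ LinearMap.range (T : E →ₗ[ℝ] F))) :=
  fredholm_comp_index_general T S hTker hTclosed hTcoker hSker hSclosed hScoker
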